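/- Let f : ℝ → ℝ² be a continuous map. Then there exist four points x₀ < y₀ < y₁ < x₁ in ℝ such that the vectors f(x₁) - f(x₀) and f(y₁) - f(y₀) are parallel (i.e., linearly dependent). -/
import Mathlib

private def det2 (u v : Fin 2 → ℝ) : ℝ := u 0 * v 1 - u 1 * v 0

private lemma dep_of_det2 (u v : Fin 2 → ℝ) (h : det2 u v = 0) :
    ¬ LinearIndependent ℝ ![u, v] := by
  rw [linearIndependent_fin2]
  push_neg
  intro hv
  unfold det2 at h
  by_cases h0 : v 0 = 0
  · have h1 : v 1 ≠ 0 := by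
      intro h1; apply hv; funext i; fin_cases i <;> simp [h0, h1]
    refine ⟨u 1 / v 1, ?_⟩
    funext i
    fin_cases i <;> simp [Pi.smul_apply, smul_eq_mul]
    · have hu0 : u 0 = 0 := by
        have : u 0 * v 1 = 0 := by rw [h0] at h; linarith
        exact (mul_eq_zero.mp this).resolve_right h1
      simp [h0, hu0]
    · field_simp
  · refine ⟨u 0 / v 0, ?_⟩
    funext i
    fin_cases i <;> simp [Pi.smul_apply, smul_eq_mul]
    · field_simp
    · field_simp
      nlinarith [h]

private lemma exists_zero_of_mul_neg (G : ℝ → ℝ) (hG : Continuous G)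
    (h : G 0 * G 1 < 0) : ∃ t ∈ Set.Icc (0:ℝ) 1, G t = 0 := by
  by_cases h0 : G 0 < 0
  · have h1 : 0 < G 1 := by nlinarith
    obtain ⟨t, ht, hGt⟩ := intermediate_value_Icc (by norm_num : (0:ℝ) ≤ 1)
      hG.continuousOn ⟨h0.le, h1.le⟩
    exact ⟨t, ht, hGt⟩
  · have h0' : 0 < G 0 := by
      rcases lt_or_eq_of_le (not_lt.mp h0) with h' | h'
      · exact h'
      · exfalso; rw [← h'] at h; norm_num at h
    have h1 : G 1 < 0 := by nlinarith
    obtain ⟨t, ht, hGt⟩ := intermediate_value_Icc' (by norm_num : (0:ℝ) ≤ 1)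
      hG.continuousOn ⟨h1.le, h0'.le⟩
    exact ⟨t, ht, hGt⟩

private lemma key (f : ℝ → (Fin 2 → ℝ)) (hf : Continuous f) (a : ℝ)
    (hne : det2 (f (a+2) - f (a+1)) (f (a+1) - f a) ≠ 0) :
    ∃ x₀ y₀ y₁ x₁ : ℝ, x₀ < y₀ ∧ y₀ < y₁ ∧ y₁ < x₁ ∧
      ¬ LinearIndependent ℝ ![f x₁ - f x₀, f y₁ - f y₀] := by
  -- H ε = D(a-ε, a, a+1, a+2) * D(a, a+1, a+2, a+2+ε), written with coordinates
  set H : ℝ → ℝ := fun ε =>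
    ((f (a+2) 0 - f (a-ε) 0) * (f (a+1) 1 - f a 1)
      - (f (a+2) 1 - f (a-ε) 1) * (f (a+1) 0 - f a 0)) *
    ((f (a+2+ε) 0 - f a 0) * (f (a+2) 1 - f (a+1) 1)
      - (f (a+2+ε) 1 - f a 1) * (f (a+2) 0 - f (a+1) 0)) with hHdef
  have hHcont : Continuous H := by
    apply Continuous.mul <;> apply Continuous.sub <;> apply Continuous.mul <;>
      apply Continuous.sub <;>
      exact (continuous_apply _).comp (hf.comp (by continuity))
  have hH0 : H 0 < 0 := by
    have hd : 0 < det2 (f (a+2) - f (a+1)) (f (a+1) - f a) *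
        det2 (f (a+2) - f (a+1)) (f (a+1) - f a) := mul_self_pos.mpr hne
    have : H 0 = -(det2 (f (a+2) - f (a+1)) (f (a+1) - f a) *
        det2 (f (a+2) - f (a+1)) (f (a+1) - f a)) := by
      rw [hHdef]
      simp only [det2, Pi.sub_apply, sub_zero, add_zero]
      ring
    rw [this]; linarith
  have hev : ∀ᶠ ε in nhdsWithin (0:ℝ) (Set.Ioi 0), H ε < 0 := by
    have h1 : ∀ᶠ ε in nhds (0:ℝ), H ε < 0 :=
      (hHcont.continuousAt (x := 0)).eventually_lt_const hH0
    exact h1.filter_mono nhdsWithin_le_nhds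
  obtain ⟨ε, hHε, hε⟩ := (hev.and (eventually_mem_nhdsWithin)).exists
  rw [Set.mem_Ioi] at hε
  -- G t : determinant along the segment of configurations
  set G : ℝ → ℝ := fun t =>
    (f (a+2+t*ε) 0 - f (a-(1-t)*ε) 0) * (f (a+1+t) 1 - f (a+t) 1)
      - (f (a+2+t*ε) 1 - f (a-(1-t)*ε) 1) * (f (a+1+t) 0 - f (a+t) 0) with hGdef
  have hGcont : Continuous G := by
    apply Continuous.sub <;> apply Continuous.mul <;> apply Continuous.sub <;>
      exact (continuous_apply _).comp (hf.comp (by continuity))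
  have hmul : G 0 * G 1 < 0 := by
    have e0 : G 0 = (f (a+2) 0 - f (a-ε) 0) * (f (a+1) 1 - f a 1)
        - (f (a+2) 1 - f (a-ε) 1) * (f (a+1) 0 - f a 0) := by
      simp only [hGdef]
      have k1 : a+2+0*ε = a+2 := by ring
      have k2 : a-(1-0)*ε = a-ε := by ring
      have k3 : a+1+(0:ℝ) = a+1 := by ring
      have k4 : a+(0:ℝ) = a := by ring
      rw [k1, k2, k3, k4]
    have e1 : G 1 = (f (a+2+ε) 0 - f a 0) * (f (a+2) 1 - f (a+1) 1)
        - (f (a+2+ε) 1 - f a 1) * (f (a+2) 0 - f (a+1) 0) := by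
      simp only [hGdef]
      have k1 : a+2+1*ε = a+2+ε := by ring
      have k2 : a-(1-1)*ε = a := by ring
      have k3 : a+1+(1:ℝ) = a+2 := by ring
      have k4 : a+(1:ℝ) = a+1 := by ring
      rw [k1, k2, k3, k4]
    simp only [hHdef] at hHε
    rw [e0, e1]
    exact hHε
  obtain ⟨t, ht, hGt⟩ := exists_zero_of_mul_neg G hGcont hmul
  obtain ⟨ht0, ht1⟩ := ht
  refine ⟨a-(1-t)*ε, a+t, a+1+t, a+2+t*ε, ?_, by linarith, ?_, ?_⟩
  · rcases eq_or_lt_of_le ht0 with h' | h'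
    · rw [← h']; simp; linarith
    · have : 0 ≤ (1-t)*ε := mul_nonneg (by linarith) hε.le
      linarith
  · rcases eq_or_lt_of_le ht1 with h' | h'
    · rw [h']; linarith
    · have : 0 ≤ t*ε := mul_nonneg ht0 hε.le
      linarith
  · apply dep_of_det2
    rw [det2]
    simp only [Pi.sub_apply]
    rw [hGdef] at hGt
    exact hGt

theorem stmt_0 (f : ℝ → (Fin 2 → ℝ)) (hf : Continuous f) :
    ∃ x₀ y₀ y₁ x₁ : ℝ, x₀ < y₀ ∧ y₀ < y₁ ∧ y₁ < x₁ ∧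
      ¬ LinearIndependent ℝ ![f x₁ - f x₀, f y₁ - f y₀] := by
  by_cases h1 : det2 (f 2 - f 1) (f 1 - f 0) = 0
  · by_cases h2 : det2 (f 3 - f 2) (f 2 - f 1) = 0
    · refine ⟨0, 1, 2, 3, by norm_num, by norm_num, by norm_num, ?_⟩
      apply dep_of_det2
      unfold det2 at h1 h2 ⊢
      simp only [Pi.sub_apply] at h1 h2 ⊢
      linear_combination h2 - h1
    · have := key f hf 1 (by norm_num; exact h2)
      exact this
  · have := key f hf 0 (by norm_num; exact h1)
    exact this
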